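/- arXiv:2504.09938 — 2 statements merged into one kernel-verified Lean document; each statement's English description precedes it below -/
import Mathlib

section
/- For every even natural number n > 1 and every natural number i, F_{i + 2n} ≡ F_i (mod F_n). -/
open Nat

lemma cassini (n : ℕ) : ((fib (n+1) : ℤ))^2 = fib n * fib (n+2) + (-1)^n := by
  induction n with
  | zero => simp
  | succ k ih =>
    have h3 : (fib (k+3) : ℤ) = fib (k+1) + fib (k+2) := by
      have := @fib_add_two (k+1); exact_mod_cast this
    have h2 : (fib (k+2) : ℤ) = fib k + fib (k+1) := by
      have := @fib_add_two k; exact_mod_cast this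
    rw [show k+1+1 = k+2 from rfl, show k+1+2 = k+3 from rfl, h3]
    linear_combination (-1 : ℤ) * ih + (fib (k+2) : ℤ) * h2

lemma sq_one (n : ℕ) (he : Even n) : fib (n+1)^2 ≡ 1 [MOD fib n] := by
  have hz := cassini n
  rw [he.neg_one_pow] at hz
  have hnat : fib (n+1)^2 = fib n * fib (n+2) + 1 := by exact_mod_cast hz
  calc fib (n+1)^2 = fib (n+2) * fib n + 1 := by rw [hnat]; ring
    _ ≡ 0 + 1 [MOD fib n] := Nat.ModEq.add_right _ (Nat.modEq_zero_iff_dvd.2 (dvd_mul_left _ _))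
    _ = 1 := by ring

lemma shift (n i : ℕ) : fib (i + n) ≡ fib i * fib (n+1) [MOD fib n] := by
  cases i with
  | zero => simp [Nat.modEq_zero_iff_dvd]
  | succ j =>
    have h : fib (j + n + 1) = fib j * fib n + fib (j+1) * fib (n+1) := fib_add j n
    calc fib (j + 1 + n) = fib j * fib n + fib (j+1) * fib (n+1) := by
          rw [show j + 1 + n = j + n + 1 by ring, h]
      _ ≡ 0 + fib (j+1) * fib (n+1) [MOD fib n] :=
          Nat.ModEq.add_right _ (Nat.modEq_zero_iff_dvd.2 (dvd_mul_left _ _))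
      _ = fib (j+1) * fib (n+1) := by ring

theorem stmt_9 (n : ℕ) (hn : 1 < n) (he : Even n) (i : ℕ) :
    Nat.fib (i + 2 * n) ≡ Nat.fib i [MOD Nat.fib n] := by
  calc fib (i + 2 * n) = fib ((i + n) + n) := by ring_nf
    _ ≡ fib (i + n) * fib (n+1) [MOD fib n] := shift n (i + n)
    _ ≡ (fib i * fib (n+1)) * fib (n+1) [MOD fib n] := (shift n i).mul_right _
    _ = fib i * fib (n+1)^2 := by ring
    _ ≡ fib i * 1 [MOD fib n] := (sq_one n he).mul_left _
    _ = fib i := by ring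
end

section
/- There are infinitely many odd integers k such that k divides the sum of the first k nonzero Fibonacci numbers, i.e., the set {k odd : k ∣ ∑_{i=1}^k F_i} is infinite. -/
/-!
Work in `R[ω]` with `ω² = ω + 1` (`QuadraticAlgebra R 1 1`), where `ω^(n+1) = F_n + F_{n+1} ω`.
If `n` is even and `F_n = 0` in `R`, then `ω^n` is a scalar whose norm is `(-1)^n = 1`, so
`ω^(2n) = 1` and `F` is `2n`-periodic in `R`.

For a prime `p ≡ 17 (mod 30)`, `5` is not a square mod `p`, so Frobenius sends `ω` to its
conjugate `1 - ω`; hence `ω^(2p) = (1 - ω)² = 2 - ω` and `F_{2p} ≡ -1 (mod p)`. Periodicity modulo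
`F_6 = 8` gives `F_{2p} ≡ F_10 ≡ -1 (mod 8)`. So `k = F_{2p}` is odd and `4p ∣ k + 1`, whence
`F_{k+2} ≡ F_1 = 1 (mod k)` by `4p`-periodicity modulo `k`, and `∑_{i ≤ k} F_i = F_{k+2} - 1`.
-/

open Nat (fib)
open QuadraticAlgebra

section Golden

variable {R : Type*} [CommRing R]

theorem omega_pow_succ_eq_fib (n : ℕ) :
    (ω : QuadraticAlgebra R 1 1) ^ (n + 1) = ⟨fib n, fib (n + 1)⟩ := by
  induction n with
  | zero => ext <;> simp
  | succ n ih =>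
    rw [pow_succ', ih, omega_mul_mk, Nat.fib_add_two]
    ext <;> simp

theorem im_omega_pow (n : ℕ) : ((ω : QuadraticAlgebra R 1 1) ^ n).im = fib n := by
  cases n with
  | zero => simp
  | succ n => rw [omega_pow_succ_eq_fib]

theorem norm_omega : QuadraticAlgebra.norm (ω : QuadraticAlgebra R 1 1) = -1 := by
  simp [norm_def]

theorem omega_pow_two_mul_eq_one {n : ℕ} (hn : Even n) (hfib : (fib n : R) = 0) :
    (ω : QuadraticAlgebra R 1 1) ^ (2 * n) = 1 := by
  obtain ⟨x, hx⟩ : ∃ x : R, (ω : QuadraticAlgebra R 1 1) ^ n = algebraMap R _ x :=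
    ⟨_, QuadraticAlgebra.ext rfl (by simp [im_omega_pow, hfib])⟩
  have hx2 : x ^ 2 = 1 := by
    rw [← norm_algebraMap (a := (1 : R)) (b := 1), ← hx, map_pow, norm_omega, hn.neg_one_pow]
  rw [mul_comm, pow_mul, hx, ← map_pow, hx2, map_one]

theorem periodic_natCast_fib {n : ℕ} (hn : Even n) (hfib : (fib n : R) = 0) :
    Function.Periodic (fun m ↦ (fib m : R)) (2 * n) := fun m ↦ by
  simp only [← im_omega_pow (R := R), pow_add, omega_pow_two_mul_eq_one hn hfib, mul_one]

end Golden

section Prime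

variable {p : ℕ} [Fact p.Prime]

theorem ZMod.not_isSquare_five (hp2 : p ≠ 2) (hp5 : p % 5 = 2 ∨ p % 5 = 3) :
    ¬IsSquare (5 : ZMod p) := by
  have : Fact (Nat.Prime 5) := ⟨by norm_num⟩
  rw [← Nat.cast_ofNat, ← ZMod.exists_sq_eq_prime_iff_of_mod_four_eq_one (by norm_num) hp2,
    ← ZMod.natCast_mod]
  rcases hp5 with h | h <;> rw [h] <;> decide +revert

theorem ZMod.five_pow_div_two_eq_neg_one (h5 : ¬IsSquare (5 : ZMod p)) :
    (5 : ZMod p) ^ (p / 2) = -1 := by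
  have h0 : (5 : ZMod p) ≠ 0 := fun h ↦ h5 (h ▸ IsSquare.zero)
  exact (ZMod.pow_div_two_eq_neg_one_or_one p h0).resolve_left
    (mt (ZMod.euler_criterion p h0).mpr h5)

theorem omega_pow_prime (hp2 : p ≠ 2) (h5 : ¬IsSquare (5 : ZMod p)) :
    (ω : QuadraticAlgebra (ZMod p) 1 1) ^ p = 1 - ω := by
  have : CharP (QuadraticAlgebra (ZMod p) 1 1) p :=
    charP_of_injective_algebraMap algebraMap_injective p
  have hodd := Nat.two_mul_div_two_add_one_of_odd ((Fact.out : p.Prime).odd_of_ne_two hp2)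
  have hsq : (2 * ω - 1 : QuadraticAlgebra (ZMod p) 1 1) ^ 2 = algebraMap (ZMod p) _ 5 := by
    ext <;> simp [sq] <;> norm_num
  have heuler : (2 * ω - 1 : QuadraticAlgebra (ZMod p) 1 1) ^ p = -(2 * ω - 1) :=
    calc (2 * ω - 1 : QuadraticAlgebra (ZMod p) 1 1) ^ p
        = ((2 * ω - 1) ^ 2) ^ (p / 2) * (2 * ω - 1) := by rw [← pow_mul, ← pow_succ, hodd]
      _ = -(2 * ω - 1) := by
        rw [hsq, ← map_pow, ZMod.five_pow_div_two_eq_neg_one h5, map_neg, map_one]; ring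
  have hfrob : (2 * ω - 1 : QuadraticAlgebra (ZMod p) 1 1) ^ p = 2 * ω ^ p - 1 := by
    rw [← frobenius_def, map_sub, map_mul, map_ofNat, map_one, frobenius_def]
  have htwo : IsUnit (2 : QuadraticAlgebra (ZMod p) 1 1) := by
    have h2 : (2 : ZMod p) ≠ 0 := Ring.two_ne_zero (by rwa [ZMod.ringChar_zmod_n])
    have := h2.isUnit.map (algebraMap (ZMod p) (QuadraticAlgebra (ZMod p) 1 1))
    rwa [map_ofNat] at this
  exact htwo.mul_left_cancel (by linear_combination hfrob.symm.trans heuler)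

theorem natCast_fib_two_mul_prime (hp2 : p ≠ 2) (h5 : ¬IsSquare (5 : ZMod p)) :
    (fib (2 * p) : ZMod p) = -1 := by
  rw [← im_omega_pow, mul_comm, pow_mul, omega_pow_prime hp2 h5]
  simp [sq]

end Prime

theorem Nat.sum_Icc_fib (n : ℕ) : ∑ i ∈ Finset.Icc 1 n, fib i = fib (n + 2) - 1 := by
  rw [Nat.fib_succ_eq_succ_sum, Finset.range_eq_Ico, Finset.sum_eq_sum_Ico_succ_bot (by omega),
    Nat.fib_zero, zero_add, Nat.add_sub_cancel, Finset.Ico_add_one_right_eq_Icc]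

theorem Nat.fib_dvd_fib_fib_add_two_sub_one {n : ℕ} (hn : Even n) (h : 2 * n ∣ fib n + 1) :
    fib n ∣ fib (fib n + 2) - 1 := by
  obtain ⟨t, ht⟩ := h
  have hper := periodic_natCast_fib (R := ZMod (fib n)) hn (ZMod.natCast_self _)
  have hk : fib n + 2 = 1 + t * (2 * n) := by rw [mul_comm t]; omega
  have h1 : (fib (fib n + 2) : ZMod (fib n)) = fib 1 := by rw [hk]; exact hper.nat_mul t 1
  rw [Nat.fib_one, ← Nat.cast_one, ZMod.natCast_eq_natCast_iff] at h1
  exact (Nat.modEq_iff_dvd' (Nat.fib_pos.mpr (by omega))).mp h1.symm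

theorem Nat.eight_mul_dvd_fib_two_mul_add_one {p : ℕ} (hp : p.Prime)
    (hp5 : p % 5 = 2 ∨ p % 5 = 3) (hp6 : p % 6 = 5) : 8 * p ∣ fib (2 * p) + 1 := by
  have : Fact p.Prime := ⟨hp⟩
  have hp2 : p ≠ 2 := by omega
  have hmod8 : (fib (2 * p) : ZMod 8) = fib 10 := by
    have hper := periodic_natCast_fib (R := ZMod 8) (n := 6) (by decide) (by decide)
    rw [show 2 * p = 10 + p / 6 * (2 * 6) by omega]
    exact hper.nat_mul _ 10
  have hmodp := natCast_fib_two_mul_prime hp2 (ZMod.not_isSquare_five hp2 hp5)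
  refine Nat.Coprime.mul_dvd_of_dvd_of_dvd ?_ ?_ ?_
  · exact (hp.coprime_iff_not_dvd.mpr (Nat.not_dvd_of_pos_of_lt (by norm_num) (by omega))).symm
  · rw [← ZMod.natCast_eq_zero_iff, Nat.cast_add, hmod8]; decide
  · rw [← ZMod.natCast_eq_zero_iff, Nat.cast_add, hmodp]; simp

theorem stmt_17 :
    {k : ℕ | Odd k ∧ k ∣ ∑ i ∈ Finset.Icc 1 k, Nat.fib i}.Infinite := by
  refine Set.infinite_of_forall_exists_gt fun a ↦ ?_
  obtain ⟨p, hpa, hp, hp30⟩ :=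
    Nat.forall_exists_prime_gt_and_modEq a (q := 30) (a := 17) (by norm_num) (by norm_num)
  have hp30 : p % 30 = 17 := hp30
  have hdvd := Nat.eight_mul_dvd_fib_two_mul_add_one hp (by omega) (by omega)
  refine ⟨fib (2 * p), ⟨?_, ?_⟩, ?_⟩
  · have := (dvd_mul_right 8 p).trans hdvd
    exact Nat.odd_iff.mpr (by omega)
  · rw [Nat.sum_Icc_fib]
    exact Nat.fib_dvd_fib_fib_add_two_sub_one (even_two_mul p)
      ((Dvd.intro 2 (by ring)).trans hdvd)
  · have := Nat.le_fib_add_one (2 * p)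
    omega
end
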